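/- Let Σ be a finite alphabet, n a frame on Σ, and s : {1,…,2^{M_n}} → Σ a string. Let I_v ⊆ {1,…,2^{M_n}} be an M_n-saturated arithmetic progression on which s is constantly equal to some σ ∈ Σ (i.e. the vertex v of the associated labeled binary tree with leaf-index set I_v has label σ), and let D = diff_{I_v} be its common difference. Then: (1) if σ ∈ Σ_n and D = 2^{n(σ)−1}, the restriction s|_{I_v} is (i,d)_n-relaxable for every i ∈ [0, |I_v|] and every d with D ≤ d ≤ 2D; (2) if σ ∈ Σ_n and D = 2^{n(σ)}, then s|_{I_v} is (i,d)_n-relaxable for every i ∈ [0, |I_v|] and every d with D/2 ≤ d ≤ D; (3) if σ ∉ Σ_n, then s|_{I_v} is (i,d)_n-relaxable for every i ∈ [0, |I_v|] and every d with 1 ≤ d ≤ 2D. -/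
import Mathlib


open scoped Classical

/-- A frame on the alphabet `A`: a positive integer value for each character of a nonempty
subset `supp` of `A`. -/
structure Frame (A : Type*) where
  supp : Finset A
  supp_nonempty : supp.Nonempty
  val : A → ℕ
  val_pos : ∀ a ∈ supp, 1 ≤ val a

/-- `M_n = max_{σ ∈ Σ_n} (n σ + 5)`. -/
def Frame.M {A : Type*} (F : Frame A) : ℕ := F.supp.sup fun a => F.val a + 5

/-- A (partial) string with characters from `A`: a partial function `ℕ → A`, `none` meaning
"not in the domain". -/
def PStr (A : Type*) := ℕ → Option A

/-- The domain of a string. -/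
def PStr.dom {A : Type*} (s : PStr A) : Set ℕ := {i | (s i).isSome}

/-- The set of characters appearing in a string. -/
def PStr.chars {A : Type*} (s : PStr A) : Set A := {σ | ∃ i, s i = some σ}

/-- `max_n I = ⌈(max I) / 2^{M_n}⌉` for the domain `I` of the string `s`. -/
noncomputable def PStr.maxn {A : Type*} (F : Frame A) (s : PStr A) : ℕ :=
  (sSup s.dom + 2 ^ F.M - 1) / 2 ^ F.M

/-- `s[n,k]`: the restriction of the translate of `s` by `−(k−1)·2^{M_n}` to `{1,…,2^{M_n}}`. -/
def PStr.shift {A : Type*} (F : Frame A) (k : ℕ) (s : PStr A) : PStr A :=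
  fun i => if 1 ≤ i ∧ i ≤ 2 ^ F.M then s (i + (k - 1) * 2 ^ F.M) else none

/-- `MaxGap(s,σ)` (in `ℕ∞`): the sup of all `m ≥ 1` such that for some `k` with
`k, k+m` in the domain, `σ` does not occur strictly between `k` and `k+m`. -/
noncomputable def PStr.maxGap {A : Type*} (s : PStr A) (σ : A) : ℕ∞ :=
  sSup ((fun m : ℕ => (m : ℕ∞)) ''
    {m | 1 ≤ m ∧ ∃ k : ℕ, k ∈ s.dom ∧ k + m ∈ s.dom ∧
      ∀ i ∈ s.dom, k < i → i < k + m → s i ≠ some σ})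

/-- `MinGap(s,σ)` (in `ℕ∞`): the inf of all `m ≥ 1` with `s k = s (k+m) = σ` for some `k`. -/
noncomputable def PStr.minGap {A : Type*} (s : PStr A) (σ : A) : ℕ∞ :=
  sInf ((fun m : ℕ => (m : ℕ∞)) ''
    {m | 1 ≤ m ∧ ∃ k : ℕ, s k = some σ ∧ s (k + m) = some σ})

/-- `s` is locally `n`-compatible: for every `σ ∈ Σ_n` appearing in `s`,
`2^{n σ − 1} ≤ MinGap(s,σ) ≤ MaxGap(s,σ) ≤ 2^{n σ}`. -/
def PStr.LocallyCompatible {A : Type*} (F : Frame A) (s : PStr A) : Prop :=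
  ∀ σ ∈ F.supp, σ ∈ s.chars →
    (2 ^ (F.val σ - 1) : ℕ∞) ≤ s.minGap σ ∧ s.minGap σ ≤ s.maxGap σ ∧
      s.maxGap σ ≤ (2 ^ F.val σ : ℕ∞)

/-- `s` is `n`-compatible: for every `σ ∈ Σ_n`,
`2^{n σ − 1} ≤ MinGap(s,σ) ≤ MaxGap(s,σ) ≤ 2^{n σ}`. -/
def PStr.Compatible {A : Type*} (F : Frame A) (s : PStr A) : Prop :=
  ∀ σ ∈ F.supp,
    (2 ^ (F.val σ - 1) : ℕ∞) ≤ s.minGap σ ∧ s.minGap σ ≤ s.maxGap σ ∧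
      s.maxGap σ ≤ (2 ^ F.val σ : ℕ∞)

/-- `s ∨ t`: the common extension of strings with disjoint domains. -/
def PStr.join {A : Type*} (s t : PStr A) : PStr A :=
  fun i => (s i).orElse fun _ => t i

/-- The translate `arr s m` of `s` by `m ≥ 0`. -/
def PStr.translate {A : Type*} (m : ℕ) (s : PStr A) : PStr A :=
  fun i => if m ≤ i then s (i - m) else none

/-- The restriction of `s` to a set of positions. -/
noncomputable def PStr.restrict {A : Type*} (s : PStr A) (I : Set ℕ) : PStr A :=
  fun i => if i ∈ I then s i else none

/-- The `n`-concatenation `s ∧_n t`. -/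
noncomputable def PStr.concatN {A : Type*} (F : Frame A) (s t : PStr A) : PStr A :=
  s.join (PStr.translate (s.maxn F * 2 ^ F.M) t)

/-- `s ⋄_n t`: glueing overlapping strings (assuming `s[n,−1] = t[n,+1]`). -/
noncomputable def PStr.diamondN {A : Type*} (F : Frame A) (s t : PStr A) : PStr A :=
  PStr.concatN F (s.restrict (Set.Icc 1 ((s.maxn F - 1) * 2 ^ F.M))) t

/-- `s →_{n,t} s'`: `t` is a locally `n`-compatible connecting string from `s` to `s'`,
i.e. `Σ_t = Σ_s = Σ_{s'}`, `t[n,+1] = s` and `t[n,−1] = s'`. -/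
def PStr.StrArrow {A : Type*} (F : Frame A) (s s' t : PStr A) : Prop :=
  t.chars = s.chars ∧ s.chars = s'.chars ∧ t.LocallyCompatible F ∧
    t.shift F 1 = s ∧ t.shift F (t.maxn F) = s'

/-- The arithmetic progression `{a, a + D, …, a + D(L−1)}`. -/
def APset (a D L : ℕ) : Set ℕ := {x | ∃ m : ℕ, m < L ∧ x = a + D * m}

/-- `DOM^∞_n(J, i, k, d)` for `J` the arithmetic progression with first element `a`, common
difference `D` and length `L`: the first `k·L + i` terms of `J` extended periodically, followed —
after an extra jump of `d` — by an infinite arithmetic progression with difference `D`. -/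
def DOMinf (a D L i k d : ℕ) : Set ℕ :=
  {x | ∃ m : ℕ, m < k * L + i ∧ x = a + D * m} ∪
  {x | ∃ m : ℕ, x = a + D * (k * L + i - 1) + d + D * m}

/-- `DOM_n(J, i, k, d) = DOM^∞_n(J, i, k, d) ∩ {1, …, (k+3)·2^{M_n}}`. -/
def DOMset {A : Type*} (F : Frame A) (a D L i k d : ℕ) : Set ℕ :=
  DOMinf a D L i k d ∩ Set.Icc 1 ((k + 3) * 2 ^ F.M)

/-- `stree(u) ≅ stree(u')` for strings `u, u'` whose domains are saturated arithmetic
progressions with `L` elements (`L` a power of two): there is a bijection `π` of the `L` leaf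
positions which preserves labels (reading each domain in increasing order, via `Nat.nth`) and
preserves the dyadic tree structure, i.e. agreement modulo `2^t` for every `t`. -/
def TreeIso {A : Type*} (L : ℕ) (u u' : PStr A) : Prop :=
  ∃ π : ℕ → ℕ, Set.BijOn π (Set.Iio L) (Set.Iio L) ∧
    (∀ m : ℕ, m < L →
      u' (Nat.nth (· ∈ u'.dom) (π m)) = u (Nat.nth (· ∈ u.dom) m)) ∧
    (∀ t m m' : ℕ, m < L → m' < L →
      (m ≡ m' [MOD 2 ^ t] ↔ π m ≡ π m' [MOD 2 ^ t]))

/-- `s` (a string on the saturated arithmetic progression with first element `a`, common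
difference `D` and length `L`) is `(i,d)_n`-relaxable: there are `k ≥ 1` and a string `t` on
`DOM_n(J,i,k,d)` such that `s →_{n,t} u` for `u := t[n,−1]` and `stree(u) ≅ stree(s)`. -/
def Relaxable {A : Type*} (F : Frame A) (a D L : ℕ) (s : PStr A) (i d : ℕ) : Prop :=
  ∃ k : ℕ, 1 ≤ k ∧ ∃ t : PStr A,
    t.dom = DOMset F a D L i k d ∧
    PStr.StrArrow F s (t.shift F (t.maxn F)) t ∧
    TreeIso L s (t.shift F (t.maxn F))

lemma main_relax {A : Type*} (F : Frame A) (s : PStr A)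
    (a D L i d : ℕ) (ha1 : 1 ≤ a) (haD : a ≤ D)
    (hDE : D ≤ 2 ^ F.M) (hD1 : 1 ≤ D) (hDL : D * L = 2 ^ F.M)
    (σ : A) (hconst : ∀ x ∈ APset a D L, s x = some σ)
    (hiL : i ≤ L) (hd1 : 1 ≤ d) (hd2 : d ≤ 2 * D)
    (hgap : σ ∈ F.supp → 2 ^ (F.val σ - 1) ≤ min D d ∧ max D d ≤ 2 ^ F.val σ) :
    Relaxable F a D L (s.restrict (APset a D L)) i d := by
  set E := 2 ^ F.M with hE
  have hE1 : 1 ≤ E := Nat.one_le_two_pow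
  have hL1 : 1 ≤ L := by
    rcases Nat.eq_zero_or_pos L with h | h
    · subst h; simp at hDL; omega
    · exact h
  set B := a + D * (2 * L + i - 1) + d with hB
  -- multiplication helper
  have mulD : ∀ p q : ℕ, p ≤ q → D * p ≤ D * q := fun p q h => Nat.mul_le_mul_left D h
  have hD2L : D * (2 * L - 1) + D = 2 * E := by
    have h1 : 2 * L - 1 + 1 = 2 * L := by omega
    calc D * (2 * L - 1) + D = D * (2 * L - 1 + 1) := by ring
    _ = D * (2 * L) := by rw [h1]
    _ = 2 * (D * L) := by ring
    _ = 2 * E := by rw [hDL]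
  have hD3L : D * (3 * L - 1) + D = 3 * E := by
    have h1 : 3 * L - 1 + 1 = 3 * L := by omega
    calc D * (3 * L - 1) + D = D * (3 * L - 1 + 1) := by ring
    _ = D * (3 * L) := by rw [h1]
    _ = 3 * (D * L) := by ring
    _ = 3 * E := by rw [hDL]
  have hP1 : 2 * L - 1 ≤ 2 * L + i - 1 := by omega
  have hP2 : 2 * L + i - 1 ≤ 3 * L - 1 := by omega
  have hBgtE : E < B := by
    have h1 := mulD _ _ hP1
    have h2 := mulD _ _ hP2
    omega
  have hBle : B ≤ 3 * E + 2 * D := by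
    have h2 := mulD _ _ hP2
    omega
  have hfirst_le : ∀ m, m < 2 * L + i → a + D * m ≤ 3 * E := by
    intro m hm
    have h1 := mulD m (3 * L - 1) (by omega)
    omega
  -- membership in DOMset
  have hmemD : ∀ x, x ∈ DOMset F a D L i 2 d ↔
      ((∃ m, m < 2 * L + i ∧ x = a + D * m) ∨ (∃ m, x = B + D * m)) ∧ 1 ≤ x ∧ x ≤ 5 * E := by
    intro x
    simp only [DOMset, DOMinf, Set.mem_inter_iff, Set.mem_union, Set.mem_setOf_eq, Set.mem_Icc,
      ← hB, ← hE]
  -- the connecting string: constantly σ on DOMset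
  set t : PStr A := (fun x => if x ∈ DOMset F a D L i 2 d then some σ else none) with htdef
  have ht_val : ∀ x, x ∈ DOMset F a D L i 2 d → t x = some σ := by
    intro x hx; simp only [htdef, if_pos hx]
  have ht_none : ∀ x, x ∉ DOMset F a D L i 2 d → t x = none := by
    intro x hx; simp only [htdef, if_neg hx]
  have ht_iff : ∀ x τ, t x = some τ ↔ x ∈ DOMset F a D L i 2 d ∧ τ = σ := by
    intro x τ
    constructor
    · intro h
      by_cases hx : x ∈ DOMset F a D L i 2 d
      · rw [ht_val x hx] at h; exact ⟨hx, (Option.some_inj.mp h).symm⟩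
      · rw [ht_none x hx] at h; exact absurd h (by simp)
    · rintro ⟨hx, rfl⟩; exact ht_val x hx
  have htdom : t.dom = DOMset F a D L i 2 d := by
    ext x
    by_cases hx : x ∈ DOMset F a D L i 2 d
    · simp [PStr.dom, ht_val x hx, hx]
    · simp [PStr.dom, ht_none x hx, hx]
  -- a is in DOMset
  have hadomset : a ∈ DOMset F a D L i 2 d := by
    rw [hmemD]
    exact ⟨Or.inl ⟨0, by omega, by ring⟩, by omega, by omega⟩
  have haDdomset : a + D ∈ DOMset F a D L i 2 d := by
    rw [hmemD]
    refine ⟨Or.inl ⟨1, by omega, by ring⟩, by omega, ?_⟩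
    have := hfirst_le 1 (by omega); omega
  -- restriction to [1, E]
  have hAPmem : ∀ x, x ∈ APset a D L ↔ ∃ m, m < L ∧ x = a + D * m := by
    intro x; rfl
  have hAPbdd : ∀ x, x ∈ APset a D L → 1 ≤ x ∧ x ≤ E := by
    intro x hx
    obtain ⟨m, hm, rfl⟩ := (hAPmem x).mp hx
    have h1 := mulD m (L - 1) (by omega)
    have h2 : D * (L - 1) + D = E := by
      have h3 : L - 1 + 1 = L := by omega
      calc D * (L - 1) + D = D * (L - 1 + 1) := by ring
      _ = D * L := by rw [h3]
      _ = E := hDL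
    omega
  have hcap : ∀ x, x ≤ E → (x ∈ DOMset F a D L i 2 d ↔ x ∈ APset a D L) := by
    intro x hxE
    rw [hmemD, hAPmem]
    constructor
    · rintro ⟨h1 | h2, hx1, hx5⟩
      · obtain ⟨m, hm, rfl⟩ := h1
        refine ⟨m, ?_, rfl⟩
        by_contra hLm
        have h1 := mulD L m (by omega)
        omega
      · obtain ⟨m, rfl⟩ := h2; omega
    · rintro ⟨m, hm, rfl⟩
      have h1 := hAPbdd _ ((hAPmem _).mpr ⟨m, hm, rfl⟩)
      exact ⟨Or.inl ⟨m, by omega, rfl⟩, by omega, by omega⟩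
  -- the restricted string
  have hs'val : ∀ x, s.restrict (APset a D L) x = if x ∈ APset a D L then some σ else none := by
    intro x
    by_cases hx : x ∈ APset a D L
    · simp [PStr.restrict, hx, hconst x hx]
    · simp [PStr.restrict, hx]
  have hshift1 : t.shift F 1 = s.restrict (APset a D L) := by
    funext x
    simp only [PStr.shift, ← hE]
    by_cases hx : 1 ≤ x ∧ x ≤ E
    · rw [if_pos hx]
      have hx0 : x + (1 - 1) * E = x := by omega
      rw [hx0, hs'val]
      by_cases hap : x ∈ APset a D L
      · rw [if_pos hap, ht_val _ ((hcap x hx.2).mpr hap)]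
      · rw [if_neg hap, ht_none _ (fun h => hap ((hcap x hx.2).mp h))]
    · rw [if_neg hx, hs'val, if_neg (fun h => hx (hAPbdd x h))]
  -- choice of m0: the second-branch elements in the top block
  have hm0ex : ∃ m0, 4 * E < B + D * m0 ∧ B + D * (m0 + L - 1) ≤ 5 * E := by
    by_cases hB4 : B ≤ 4 * E
    · obtain ⟨q, r, hqr, hr⟩ : ∃ q r, D * q + r = 4 * E - B ∧ r < D :=
        ⟨(4 * E - B) / D, (4 * E - B) % D, Nat.div_add_mod _ _, Nat.mod_lt _ (by omega)⟩
      refine ⟨q + 1, ?_, ?_⟩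
      · have h3 : D * (q + 1) = D * q + D := by ring
        omega
      · have heq : q + 1 + L - 1 = q + L := by omega
        rw [heq]
        have h3 : D * (q + L) = D * q + D * L := by ring
        omega
    · refine ⟨0, by omega, ?_⟩
      have hL1' : L = 1 := by
        by_contra hL
        have h1 := mulD 2 L (by omega)
        omega
      subst hL1'
      have h0 : (0:ℕ) + 1 - 1 = 0 := rfl
      rw [h0, Nat.mul_zero]
      omega
  obtain ⟨m0, hm0a, hm0b⟩ := hm0ex
  have hm0m : ∀ m, m < L → 4 * E < B + D * (m0 + m) ∧ B + D * (m0 + m) ≤ 5 * E := by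
    intro m hm
    have h1 := mulD m0 (m0 + m) (by omega)
    have h2 := mulD (m0 + m) (m0 + L - 1) (by omega)
    omega
  have hsecdom : ∀ m, m < L → B + D * (m0 + m) ∈ DOMset F a D L i 2 d := by
    intro m hm
    rw [hmemD]
    have := hm0m m hm
    exact ⟨Or.inr ⟨m0 + m, rfl⟩, by omega, by omega⟩
  -- maxn t = 5
  have hbddt : BddAbove t.dom := by
    rw [htdom]
    exact ⟨5 * E, fun x hx => ((hmemD x).mp hx).2.2⟩
  have hsup_le : sSup t.dom ≤ 5 * E := by
    apply csSup_le ⟨a, htdom ▸ hadomset⟩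
    intro x hx
    exact ((hmemD x).mp (htdom ▸ hx)).2.2
  have hsup_gt : 4 * E < sSup t.dom := by
    calc 4 * E < B + D * (m0 + 0) := (hm0m 0 (by omega)).1
    _ ≤ sSup t.dom := le_csSup hbddt (htdom ▸ hsecdom 0 (by omega))
  have hmaxn : t.maxn F = 5 := by
    show (sSup t.dom + 2 ^ F.M - 1) / 2 ^ F.M = 5
    rw [← hE]
    exact Nat.div_eq_of_lt_le (by omega) (by omega)
  -- the target string u = t.shift F 5
  have hu_eq : ∀ x, t.shift F (t.maxn F) x =
      if 1 ≤ x ∧ x ≤ E then t (x + 4 * E) else none := by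
    intro x
    rw [hmaxn]
    simp only [PStr.shift, ← hE]
  have hx0prop := hm0m 0 (by omega)
  have hx0mem := hsecdom 0 (by omega)
  set x0 := B + D * (m0 + 0) - 4 * E with hx0
  have hux0 : t.shift F (t.maxn F) x0 = some σ := by
    rw [hu_eq, if_pos (by omega)]
    have hx0' : x0 + 4 * E = B + D * (m0 + 0) := by omega
    rw [hx0', ht_val _ hx0mem]
  -- chars
  have hcht : t.chars = {σ} := by
    ext τ
    simp only [PStr.chars, Set.mem_setOf_eq, Set.mem_singleton_iff]
    constructor
    · rintro ⟨x, hx⟩; exact ((ht_iff x τ).mp hx).2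
    · rintro rfl; exact ⟨a, ht_val a hadomset⟩
  have haAP : a ∈ APset a D L := (hAPmem a).mpr ⟨0, by omega, by ring⟩
  have hchs' : (s.restrict (APset a D L)).chars = {σ} := by
    ext τ
    simp only [PStr.chars, Set.mem_setOf_eq, Set.mem_singleton_iff]
    constructor
    · rintro ⟨x, hx⟩
      rw [hs'val] at hx
      by_cases hap : x ∈ APset a D L
      · rw [if_pos hap] at hx; exact (Option.some_inj.mp hx).symm
      · rw [if_neg hap] at hx; exact absurd hx (by simp)
    · rintro rfl
      exact ⟨a, by rw [hs'val, if_pos haAP]⟩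
  have hchu : (t.shift F (t.maxn F)).chars = {σ} := by
    ext τ
    simp only [PStr.chars, Set.mem_setOf_eq, Set.mem_singleton_iff]
    constructor
    · rintro ⟨x, hx⟩
      rw [hu_eq] at hx
      by_cases hxr : 1 ≤ x ∧ x ≤ E
      · rw [if_pos hxr] at hx; exact ((ht_iff _ τ).mp hx).2
      · rw [if_neg hxr] at hx; exact absurd hx (by simp)
    · rintro rfl; exact ⟨x0, hux0⟩
  -- minimal distance between elements of DOMset
  have pair_min : ∀ x m, x ∈ DOMset F a D L i 2 d → x + m ∈ DOMset F a D L i 2 d →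
      1 ≤ m → min D d ≤ m := by
    intro x m hx hy hm
    obtain ⟨hx1, hxb1, hxb2⟩ := (hmemD x).mp hx
    obtain ⟨hy1, hyb1, hyb2⟩ := (hmemD _).mp hy
    have hmin1 : min D d ≤ D := min_le_left _ _
    have hmin2 : min D d ≤ d := min_le_right _ _
    rcases hx1 with ⟨m1, hm1, rfl⟩ | ⟨m1, rfl⟩
    · rcases hy1 with ⟨m2, hm2, he⟩ | ⟨m2, he⟩
      · rcases lt_trichotomy m1 m2 with h | h | h
        · have h2 := mulD (m1 + 1) m2 (by omega)
          have h3 : D * (m1 + 1) = D * m1 + D := by ring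
          omega
        · subst h; omega
        · have h2 := mulD (m2 + 1) m1 (by omega)
          have h3 : D * (m2 + 1) = D * m2 + D := by ring
          omega
      · have h1 := mulD m1 (2 * L + i - 1) (by omega)
        omega
    · rcases hy1 with ⟨m2, hm2, he⟩ | ⟨m2, he⟩
      · have h1 := mulD m2 (2 * L + i - 1) (by omega)
        omega
      · rcases lt_trichotomy m1 m2 with h | h | h
        · have h2 := mulD (m1 + 1) m2 (by omega)
          have h3 : D * (m1 + 1) = D * m1 + D := by ring
          omega
        · subst h; omega
        · have h2 := mulD (m2 + 1) m1 (by omega)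
          have h3 : D * (m2 + 1) = D * m2 + D := by ring
          omega
  -- between any two far-apart elements there is another element
  have hbetween : ∀ x y, x ∈ DOMset F a D L i 2 d → y ∈ DOMset F a D L i 2 d →
      x + max D d < y → ∃ z, z ∈ DOMset F a D L i 2 d ∧ x < z ∧ z < y := by
    intro x y hx hy hlt
    have hmax1 : D ≤ max D d := le_max_left _ _
    have hmax2 : d ≤ max D d := le_max_right _ _
    obtain ⟨hx1, hxb1, hxb2⟩ := (hmemD x).mp hx
    obtain ⟨hy1, hyb1, hyb2⟩ := (hmemD y).mp hy
    clear hy1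
    rcases hx1 with ⟨m1, hm1, rfl⟩ | ⟨m1, rfl⟩
    · by_cases hnext : m1 + 1 < 2 * L + i
      · have h3 : D * (m1 + 1) = D * m1 + D := by ring
        refine ⟨a + D * (m1 + 1), (hmemD _).mpr ⟨Or.inl ⟨m1 + 1, hnext, rfl⟩, ?_, ?_⟩, ?_, ?_⟩
        · omega
        · omega
        · omega
        · omega
      · have hm1e : m1 = 2 * L + i - 1 := by omega
        subst hm1e
        refine ⟨B, (hmemD _).mpr ⟨Or.inr ⟨0, ?_⟩, ?_, ?_⟩, ?_, ?_⟩
        · omega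
        · omega
        · omega
        · omega
        · omega
    · have h3 : D * (m1 + 1) = D * m1 + D := by ring
      refine ⟨B + D * (m1 + 1), (hmemD _).mpr ⟨Or.inr ⟨m1 + 1, rfl⟩, ?_, ?_⟩, ?_, ?_⟩
      · omega
      · omega
      · omega
      · omega
  -- local compatibility
  have hcompat : t.LocallyCompatible F := by
    intro τ hτ hτch
    rw [hcht, Set.mem_singleton_iff] at hτch
    subst hτch
    obtain ⟨hg1, hg2⟩ := hgap hτ
    have hcast : ∀ p q : ℕ, p ≤ q → (p : ℕ∞) ≤ (q : ℕ∞) := fun p q h => by exact_mod_cast h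
    have hmin_lb : (2 ^ (F.val τ - 1) : ℕ∞) ≤ t.minGap τ := by
      have hc : ((2 ^ (F.val τ - 1) : ℕ) : ℕ∞) = (2 ^ (F.val τ - 1) : ℕ∞) := by push_cast; ring
      rw [← hc]
      refine le_sInf ?_
      rintro w ⟨m, ⟨hm1, k, hk1, hk2⟩, rfl⟩
      refine hcast _ _ ?_
      exact le_trans hg1 (pair_min k m ((ht_iff _ _).mp hk1).1 ((ht_iff _ _).mp hk2).1 hm1)
    have hminD : t.minGap τ ≤ (D : ℕ∞) :=
      sInf_le ⟨D, ⟨hD1, a, ht_val a hadomset, ht_val _ haDdomset⟩, rfl⟩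
    have hDmax : (D : ℕ∞) ≤ t.maxGap τ := by
      refine le_sSup ⟨D, ⟨hD1, a, ?_, ?_, ?_⟩, rfl⟩
      · rw [htdom]; exact hadomset
      · rw [htdom]; exact haDdomset
      · intro z hz hz1 hz2 hzv
        rw [htdom] at hz
        obtain ⟨hz3, hzb1, hzb2⟩ := (hmemD z).mp hz
        rcases hz3 with ⟨mm, hmm, rfl⟩ | ⟨mm, rfl⟩
        · rcases Nat.eq_zero_or_pos mm with h | h
          · subst h; omega
          · have h2 := mulD 1 mm h
            have h3 : D * 1 = D := by ring
            omega
        · have h2 := mulD 1 (2 * L + i - 1) (by omega)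
          have h3 : D * 1 = D := by ring
          omega
    have hmax_ub : t.maxGap τ ≤ (2 ^ F.val τ : ℕ∞) := by
      have hc : ((2 ^ F.val τ : ℕ) : ℕ∞) = (2 ^ F.val τ : ℕ∞) := by push_cast; ring
      rw [← hc]
      refine sSup_le ?_
      rintro w ⟨m, ⟨hm1, k, hkdom, hk2dom, hbet⟩, rfl⟩
      refine hcast _ _ (le_trans ?_ hg2)
      by_contra hcon
      push_neg at hcon
      rw [htdom] at hkdom hk2dom
      obtain ⟨z, hzmem, hz1, hz2⟩ := hbetween k (k + m) hkdom hk2dom (by omega)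
      refine hbet z ?_ hz1 hz2 (ht_val z hzmem)
      rw [htdom]; exact hzmem
    exact ⟨hmin_lb, le_trans hminD hDmax, hmax_ub⟩
  -- domains and values
  have hs'dom : (s.restrict (APset a D L)).dom = APset a D L := by
    ext x
    by_cases hx : x ∈ APset a D L
    · simp [PStr.dom, hs'val, hx]
    · simp [PStr.dom, hs'val, hx]
  have hs'dval : ∀ x, x ∈ (s.restrict (APset a D L)).dom → s.restrict (APset a D L) x = some σ := by
    intro x hx
    rw [hs'dom] at hx
    rw [hs'val, if_pos hx]
  have hudval : ∀ x, x ∈ (t.shift F (t.maxn F)).dom → t.shift F (t.maxn F) x = some σ := by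
    intro x hx
    have hx' : (t.shift F (t.maxn F) x).isSome := hx
    rw [hu_eq] at hx' ⊢
    by_cases hr : 1 ≤ x ∧ x ≤ E
    · rw [if_pos hr] at hx' ⊢
      have hmem : x + 4 * E ∈ t.dom := hx'
      rw [htdom] at hmem
      exact ht_val _ hmem
    · rw [if_neg hr] at hx'
      simp at hx'
  -- nth facts via cardinality
  have hnth : ∀ (w : PStr A) (f : ℕ → ℕ), (∀ p, p < L → f p ∈ w.dom) →
      (∀ p q, p < L → q < L → f p = f q → p = q) →
      ∀ m, m < L → Nat.nth (· ∈ w.dom) m ∈ w.dom := by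
    intro w f hf hinj m hm
    refine Nat.nth_mem m (fun hf' => lt_of_lt_of_le hm ?_)
    have himg : (Finset.range L).image f ⊆ hf'.toFinset := by
      intro x hx
      simp only [Finset.mem_image, Finset.mem_range] at hx
      obtain ⟨p, hp, rfl⟩ := hx
      rw [Set.Finite.mem_toFinset]
      exact hf p hp
    have hcard : ((Finset.range L).image f).card = L := by
      rw [Finset.card_image_of_injOn, Finset.card_range]
      intro p hp q hq h
      exact hinj p q (by simpa using hp) (by simpa using hq) h
    calc L = ((Finset.range L).image f).card := hcard.symm
    _ ≤ hf'.toFinset.card := Finset.card_le_card himg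
  have hf1 : ∀ p, p < L → a + D * p ∈ (s.restrict (APset a D L)).dom := by
    intro p hp
    rw [hs'dom]
    exact (hAPmem _).mpr ⟨p, hp, rfl⟩
  have hinj1 : ∀ p q, p < L → q < L → a + D * p = a + D * q → p = q := by
    intro p q _ _ h
    exact Nat.eq_of_mul_eq_mul_left (by omega) (Nat.add_left_cancel h)
  have hf2 : ∀ p, p < L → (B + D * (m0 + p) - 4 * E) ∈ (t.shift F (t.maxn F)).dom := by
    intro p hp
    have hb := hm0m p hp
    show (t.shift F (t.maxn F) _).isSome
    rw [hu_eq, if_pos (by omega)]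
    have hxe : B + D * (m0 + p) - 4 * E + 4 * E = B + D * (m0 + p) := by omega
    rw [hxe, ht_val _ (hsecdom p hp)]
    rfl
  have hinj2 : ∀ p q, p < L → q < L →
      B + D * (m0 + p) - 4 * E = B + D * (m0 + q) - 4 * E → p = q := by
    intro p q hp hq h
    have hbp := hm0m p hp
    have hbq := hm0m q hq
    have h2 : B + D * (m0 + p) = B + D * (m0 + q) := by omega
    have h3 : m0 + p = m0 + q :=
      Nat.eq_of_mul_eq_mul_left (by omega) (Nat.add_left_cancel h2)
    omega
  have htree : TreeIso L (s.restrict (APset a D L)) (t.shift F (t.maxn F)) := by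
    refine ⟨id, Set.bijOn_id _, ?_, ?_⟩
    · intro m hm
      simp only [id_eq]
      rw [hudval _ (hnth _ _ hf2 hinj2 m hm), hs'dval _ (hnth _ _ hf1 hinj1 m hm)]
    · intro tt m m' _ _
      exact Iff.rfl
  exact ⟨2, by omega, t, htdom, ⟨by rw [hcht, hchs'], by rw [hchs', hchu], hcompat, hshift1, rfl⟩,
    htree⟩

/-- **Proposition (relaxability at a labeled vertex).** Let `s` be a string on `{1,…,2^{M_n}}`
and `I_v = APset a D L` an `M_n`-saturated arithmetic progression (so `1 ≤ a ≤ D`, `D` a power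
of two, `D·L = 2^{M_n}`) on which `s` is constantly `σ`. Then:
(1) if `σ ∈ Σ_n` and `D = 2^{n σ − 1}`, the restriction `s|_{I_v}` is `(i,d)_n`-relaxable for
every `i ≤ L` and every `D ≤ d ≤ 2D`;
(2) if `σ ∈ Σ_n` and `D = 2^{n σ}`, it is `(i,d)_n`-relaxable for every `i ≤ L` and every
`D/2 ≤ d ≤ D`;
(3) if `σ ∉ Σ_n`, it is `(i,d)_n`-relaxable for every `i ≤ L` and every `1 ≤ d ≤ 2D`. -/
theorem relaxable_of_labeled_vertex {A : Type*} [Fintype A] (F : Frame A)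
    (s : PStr A) (hdom : s.dom = Set.Icc 1 (2 ^ F.M))
    (a D L : ℕ) (ha1 : 1 ≤ a) (haD : a ≤ D)
    (hD : ∃ j : ℕ, j ≤ F.M ∧ D = 2 ^ j) (hDL : D * L = 2 ^ F.M)
    (σ : A) (hconst : ∀ x ∈ APset a D L, s x = some σ) :
    (σ ∈ F.supp → D = 2 ^ (F.val σ - 1) →
      ∀ i ≤ L, ∀ d : ℕ, D ≤ d → d ≤ 2 * D →
        Relaxable F a D L (s.restrict (APset a D L)) i d) ∧
    (σ ∈ F.supp → D = 2 ^ F.val σ →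
      ∀ i ≤ L, ∀ d : ℕ, D / 2 ≤ d → d ≤ D →
        Relaxable F a D L (s.restrict (APset a D L)) i d) ∧
    (σ ∉ F.supp →
      ∀ i ≤ L, ∀ d : ℕ, 1 ≤ d → d ≤ 2 * D →
        Relaxable F a D L (s.restrict (APset a D L)) i d) := by
  obtain ⟨j, hj, hDj⟩ := hD
  have hDE : D ≤ 2 ^ F.M := hDj ▸ Nat.pow_le_pow_right (by omega) hj
  have hD1 : 1 ≤ D := hDj ▸ Nat.one_le_two_pow
  refine ⟨?_, ?_, ?_⟩
  · intro hσ hDv i hi d hd1 hd2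
    have hv1 : 1 ≤ F.val σ := F.val_pos σ hσ
    have hpow : 2 ^ (F.val σ - 1) * 2 = 2 ^ F.val σ := by
      rw [← pow_succ]; congr 1; omega
    exact main_relax F s a D L i d ha1 haD hDE hD1 hDL σ hconst hi (by omega) (by omega)
      (fun _ => ⟨by omega, by omega⟩)
  · intro hσ hDv i hi d hd1 hd2
    have hv1 : 1 ≤ F.val σ := F.val_pos σ hσ
    have hpow : 2 ^ (F.val σ - 1) * 2 = 2 ^ F.val σ := by
      rw [← pow_succ]; congr 1; omega
    have h1 : (1:ℕ) ≤ 2 ^ (F.val σ - 1) := Nat.one_le_two_pow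
    exact main_relax F s a D L i d ha1 haD hDE hD1 hDL σ hconst hi (by omega) (by omega)
      (fun _ => ⟨by omega, by omega⟩)
  · intro hσ i hi d hd1 hd2
    exact main_relax F s a D L i d ha1 haD hDE hD1 hDL σ hconst hi hd1 hd2
      (fun h => absurd h hσ)
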